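/- Let δ₂ < 0, δ₁ ≤ δ₂, 0 ≤ ω ≤ n(δ₂ − δ₁), and υ ∈ 𝒢(δ₁, δ₂; ω). Let p ∈ (0,∞), q ∈ (0,∞]. If a sequence {f_j}_{j∈ℤ} of measurable functions on ℝⁿ satisfies sup_{P∈𝒟} υ(P)^{−1} ‖{f_j 1_P 1_{j≥j_P}}_j‖_{L Ȧ_{p,q}} < ∞, then f_j = 0 a.e. for every j ∈ ℤ; that is, the space L Ȧ_{p,q}^υ is trivial. -/

import Mathlib

open MeasureTheory
open scoped BigOperators ENNReal

/-- A dyadic cube `2^{-j}([0,1)^n + k)` in `ℝⁿ`, encoded by its generation `j`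
and its position `k`. -/
structure DyadicCube (n : ℕ) where
  j : ℤ
  k : Fin n → ℤ
deriving DecidableEq

namespace DyadicCube

variable {n : ℕ}

/-- The side length `ℓ(Q) = 2^{-j}`. -/
noncomputable def len (Q : DyadicCube n) : ℝ := (2 : ℝ) ^ (-Q.j)

/-- The lower-left corner `x_Q = 2^{-j} k`. -/
noncomputable def corner (Q : DyadicCube n) (i : Fin n) : ℝ := (2 : ℝ) ^ (-Q.j) * Q.k i

/-- The volume `|Q| = 2^{-jn}`. -/
noncomputable def vol (Q : DyadicCube n) : ℝ := Q.len ^ (n : ℕ)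

/-- The cube `Q` as a subset of `ℝⁿ`. -/
noncomputable def toSet (Q : DyadicCube n) : Set (Fin n → ℝ) :=
  {x | ∀ i, Q.corner i ≤ x i ∧ x i < Q.corner i + Q.len}

/-- The Euclidean distance `|x_Q - x_R|` between the corners of two dyadic cubes. -/
noncomputable def cdist (Q R : DyadicCube n) : ℝ :=
  Real.sqrt (∑ i, (Q.corner i - R.corner i) ^ 2)

end DyadicCube

/-- `υ : 𝒟 → (0,∞)` is a `(δ₁, δ₂; ω)`-order growth function: it is positive and
`υ(Q)/υ(R) ≤ C (1 + |x_Q - x_R|/(ℓ(Q) ∨ ℓ(R)))^ω (|Q|/|R|)^{δ₁}` when `ℓ(Q) ≤ ℓ(R)`,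
with exponent `δ₂` in place of `δ₁` when `ℓ(R) < ℓ(Q)`. -/
def IsGrowthFunction (n : ℕ) (δ₁ δ₂ ω : ℝ) (υ : DyadicCube n → ℝ) : Prop :=
  (∀ Q, 0 < υ Q) ∧ ∃ C : ℝ, 0 < C ∧ ∀ Q R : DyadicCube n,
    υ Q / υ R ≤ C * (1 + Q.cdist R / max Q.len R.len) ^ ω *
      (if Q.len ≤ R.len then (Q.vol / R.vol) ^ δ₁ else (Q.vol / R.vol) ^ δ₂)

open MeasureTheory

/-- The `ℓ^q`-norm (over `ℤ`) of a family of extended nonnegative reals,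
with the usual modification (supremum) when `q = ∞`. -/
noncomputable def lqNorm (q : ℝ≥0∞) (a : ℤ → ℝ≥0∞) : ℝ≥0∞ :=
  if q = ⊤ then ⨆ j, a j else (∑' j, a j ^ q.toReal) ^ (1 / q.toReal)

/-- The `ℓ^q(L^p)` norm `(∑_j ‖f_j‖_{L^p}^q)^{1/q}` of a sequence of functions. -/
noncomputable def LBnorm (n : ℕ) (p : ℝ) (q : ℝ≥0∞) (f : ℤ → (Fin n → ℝ) → ℝ) : ℝ≥0∞ :=
  lqNorm q (fun j => (∫⁻ x, ENNReal.ofReal |f j x| ^ p) ^ (1 / p))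

/-- The `L^p(ℓ^q)` norm `‖(∑_j |f_j|^q)^{1/q}‖_{L^p}` of a sequence of functions. -/
noncomputable def LFnorm (n : ℕ) (p : ℝ) (q : ℝ≥0∞) (f : ℤ → (Fin n → ℝ) → ℝ) : ℝ≥0∞ :=
  (∫⁻ x, (lqNorm q (fun j => ENNReal.ofReal |f j x|)) ^ p) ^ (1 / p)

/-- The truncation `{f_j 1_P 1_{j ≥ j_P}}_j` of a sequence of functions to a dyadic cube `P`. -/
noncomputable def truncate (n : ℕ) (P : DyadicCube n) (f : ℤ → (Fin n → ℝ) → ℝ) :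
    ℤ → (Fin n → ℝ) → ℝ :=
  fun j => if P.j ≤ j then P.toSet.indicator (f j) else 0

/-- The norm `‖{f_j}‖_{LḂ^υ_{p,q}} = sup_P υ(P)⁻¹ ‖{f_j 1_P 1_{j ≥ j_P}}‖_{ℓ^q(L^p)}`. -/
noncomputable def LBvNorm (n : ℕ) (p : ℝ) (q : ℝ≥0∞) (υ : DyadicCube n → ℝ)
    (f : ℤ → (Fin n → ℝ) → ℝ) : ℝ≥0∞ :=
  ⨆ P : DyadicCube n, (ENNReal.ofReal (υ P))⁻¹ * LBnorm n p q (truncate n P f)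

/-- The norm `‖{f_j}‖_{LḞ^υ_{p,q}} = sup_P υ(P)⁻¹ ‖{f_j 1_P 1_{j ≥ j_P}}‖_{L^p(ℓ^q)}`. -/
noncomputable def LFvNorm (n : ℕ) (p : ℝ) (q : ℝ≥0∞) (υ : DyadicCube n → ℝ)
    (f : ℤ → (Fin n → ℝ) → ℝ) : ℝ≥0∞ :=
  ⨆ P : DyadicCube n, (ENNReal.ofReal (υ P))⁻¹ * LFnorm n p q (truncate n P f)


/- ### Auxiliary lemmas -/

lemma measurableSet_toSet {n : ℕ} (Q : DyadicCube n) : MeasurableSet Q.toSet := by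
  have h : Q.toSet = ⋂ i, (fun x : Fin n → ℝ => x i) ⁻¹'
      Set.Ico (Q.corner i) (Q.corner i + Q.len) := by
    ext x; simp [DyadicCube.toSet, Set.mem_iInter, Set.mem_Ico]
  rw [h]
  exact MeasurableSet.iInter fun i => (measurable_pi_apply i) measurableSet_Ico

lemma le_lqNorm {q : ℝ≥0∞} (hq : 0 < q) (a : ℤ → ℝ≥0∞) (j : ℤ) : a j ≤ lqNorm q a := by
  unfold lqNorm
  split
  · exact le_iSup a j
  · rename_i hqt
    have ht : 0 < q.toReal := ENNReal.toReal_pos hq.ne' hqt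
    calc a j = (a j ^ q.toReal) ^ (1 / q.toReal) := by
          rw [← ENNReal.rpow_mul, mul_one_div_cancel ht.ne', ENNReal.rpow_one]
      _ ≤ _ := ENNReal.rpow_le_rpow (ENNReal.le_tsum j) (by positivity)

def bigCube (n : ℕ) (ε : Fin n → Bool) (m : ℕ) : DyadicCube n :=
  ⟨-(m : ℤ), fun i => if ε i then -1 else 0⟩

lemma bigCube_len {n : ℕ} (ε : Fin n → Bool) (m : ℕ) :
    (bigCube n ε m).len = 2 ^ m := by
  simp [bigCube, DyadicCube.len, zpow_natCast]

lemma bigCube_corner {n : ℕ} (ε : Fin n → Bool) (m : ℕ) (i : Fin n) :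
    (bigCube n ε m).corner i = if ε i then -(2 : ℝ) ^ m else 0 := by
  simp only [bigCube, DyadicCube.corner, neg_neg, zpow_natCast]
  split <;> simp

lemma mem_bigCube {n : ℕ} (ε : Fin n → Bool) (m : ℕ) (x : Fin n → ℝ) :
    x ∈ (bigCube n ε m).toSet ↔
      ∀ i, (if ε i then -(2:ℝ)^m ≤ x i ∧ x i < 0 else 0 ≤ x i ∧ x i < 2^m) := by
  constructor <;> intro h i <;> have hi := h i <;>
    rcases hεi : ε i with _ | _ <;>
    simp only [DyadicCube.toSet, Set.mem_setOf_eq, bigCube_corner, bigCube_len, hεi] at hi ⊢ <;>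
    simp_all

lemma bigCube_mono {n : ℕ} (ε : Fin n → Bool) {m₁ m₂ : ℕ} (h : m₁ ≤ m₂) :
    (bigCube n ε m₁).toSet ⊆ (bigCube n ε m₂).toSet := by
  intro x hx
  rw [mem_bigCube] at hx ⊢
  intro i
  have hi := hx i
  have hpow : (2:ℝ) ^ m₁ ≤ 2 ^ m₂ := pow_le_pow_right₀ one_le_two h
  rcases hεi : ε i with _ | _ <;> simp only [hεi] at hi ⊢ <;>
    constructor <;> simp_all <;> linarith [hi.1, hi.2]

lemma bigCube_cover {n : ℕ} :
    (Set.univ : Set (Fin n → ℝ)) ⊆ ⋃ (ε : Fin n → Bool), ⋃ m : ℕ, (bigCube n ε m).toSet := by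
  intro x _
  have : ∃ m : ℕ, ∀ i, |x i| < 2 ^ m := by
    obtain ⟨B, hB⟩ := Finset.exists_le (Finset.univ.image fun i : Fin n => |x i|)
    obtain ⟨m, hm⟩ := pow_unbounded_of_one_lt B (one_lt_two (α := ℝ))
    refine ⟨m, fun i => lt_of_le_of_lt (hB _ ?_) hm⟩
    exact Finset.mem_image_of_mem _ (Finset.mem_univ i)
  obtain ⟨m, hm⟩ := this
  refine Set.mem_iUnion.mpr ⟨fun i => decide (x i < 0), Set.mem_iUnion.mpr ⟨m, ?_⟩⟩
  rw [mem_bigCube]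
  intro i
  rcases abs_lt.mp (hm i) with ⟨h1, h2⟩
  by_cases hxi : x i < 0
  · rw [if_pos (by simpa using hxi)]
    exact ⟨by linarith, hxi⟩
  · rw [if_neg (by simpa using hxi)]
    exact ⟨by linarith, h2⟩

lemma trunc_lintegral {n : ℕ} (P : DyadicCube n) (f : ℤ → (Fin n → ℝ) → ℝ) {j : ℤ}
    (hj : P.j ≤ j) {p : ℝ} (hp : 0 < p) :
    ∫⁻ x, ENNReal.ofReal |truncate n P f j x| ^ p
      = ∫⁻ x in P.toSet, ENNReal.ofReal |f j x| ^ p := by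
  rw [← lintegral_indicator (measurableSet_toSet P)]
  congr 1; ext x
  by_cases hx : x ∈ P.toSet
  · simp [truncate, if_pos hj, Set.indicator_of_mem hx]
  · simp [truncate, if_pos hj, Set.indicator_of_notMem hx, ENNReal.zero_rpow_of_pos hp]

lemma setIntegral_le_of_LB {n : ℕ} {p : ℝ} (hp : 0 < p) {q : ℝ≥0∞} (hq : 0 < q)
    {υ : DyadicCube n → ℝ} (hυpos : ∀ Q, 0 < υ Q) {f : ℤ → (Fin n → ℝ) → ℝ}
    (P : DyadicCube n) {j : ℤ} (hj : P.j ≤ j) :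
    (∫⁻ x in P.toSet, ENNReal.ofReal |f j x| ^ p) ^ (1 / p)
      ≤ LBvNorm n p q υ f * ENNReal.ofReal (υ P) := by
  have h1 : (∫⁻ x in P.toSet, ENNReal.ofReal |f j x| ^ p) ^ (1 / p)
      ≤ LBnorm n p q (truncate n P f) := by
    rw [← trunc_lintegral P f hj hp]
    exact le_lqNorm hq (fun j => (∫⁻ x, ENNReal.ofReal |truncate n P f j x| ^ p) ^ (1 / p)) j
  have h0 : ENNReal.ofReal (υ P) ≠ 0 := (ENNReal.ofReal_pos.mpr (hυpos P)).ne'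
  have h2 : (ENNReal.ofReal (υ P))⁻¹ * LBnorm n p q (truncate n P f) ≤ LBvNorm n p q υ f :=
    le_iSup (fun P => (ENNReal.ofReal (υ P))⁻¹ * LBnorm n p q (truncate n P f)) P
  calc (∫⁻ x in P.toSet, ENNReal.ofReal |f j x| ^ p) ^ (1 / p)
      ≤ LBnorm n p q (truncate n P f) := h1
    _ = ENNReal.ofReal (υ P) * ((ENNReal.ofReal (υ P))⁻¹ * LBnorm n p q (truncate n P f)) := by
        rw [← mul_assoc, ENNReal.mul_inv_cancel h0 ENNReal.ofReal_ne_top, one_mul]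
    _ ≤ ENNReal.ofReal (υ P) * LBvNorm n p q υ f := mul_le_mul_right h2 _
    _ = LBvNorm n p q υ f * ENNReal.ofReal (υ P) := mul_comm _ _

lemma setIntegral_le_of_LF {n : ℕ} {p : ℝ} (hp : 0 < p) {q : ℝ≥0∞} (hq : 0 < q)
    {υ : DyadicCube n → ℝ} (hυpos : ∀ Q, 0 < υ Q) {f : ℤ → (Fin n → ℝ) → ℝ}
    (P : DyadicCube n) {j : ℤ} (hj : P.j ≤ j) :
    (∫⁻ x in P.toSet, ENNReal.ofReal |f j x| ^ p) ^ (1 / p)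
      ≤ LFvNorm n p q υ f * ENNReal.ofReal (υ P) := by
  have h1 : (∫⁻ x in P.toSet, ENNReal.ofReal |f j x| ^ p) ^ (1 / p)
      ≤ LFnorm n p q (truncate n P f) := by
    rw [← trunc_lintegral P f hj hp]
    refine ENNReal.rpow_le_rpow (lintegral_mono fun x => ?_) (by positivity)
    exact ENNReal.rpow_le_rpow
      (le_lqNorm hq (fun j' => ENNReal.ofReal |truncate n P f j' x|) j) hp.le
  have h0 : ENNReal.ofReal (υ P) ≠ 0 := (ENNReal.ofReal_pos.mpr (hυpos P)).ne'
  have h2 : (ENNReal.ofReal (υ P))⁻¹ * LFnorm n p q (truncate n P f) ≤ LFvNorm n p q υ f :=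
    le_iSup (fun P => (ENNReal.ofReal (υ P))⁻¹ * LFnorm n p q (truncate n P f)) P
  calc (∫⁻ x in P.toSet, ENNReal.ofReal |f j x| ^ p) ^ (1 / p)
      ≤ LFnorm n p q (truncate n P f) := h1
    _ = ENNReal.ofReal (υ P) * ((ENNReal.ofReal (υ P))⁻¹ * LFnorm n p q (truncate n P f)) := by
        rw [← mul_assoc, ENNReal.mul_inv_cancel h0 ENNReal.ofReal_ne_top, one_mul]
    _ ≤ ENNReal.ofReal (υ P) * LFvNorm n p q υ f := mul_le_mul_right h2 _
    _ = LFvNorm n p q υ f * ENNReal.ofReal (υ P) := mul_comm _ _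

lemma upsilon_bound {n : ℕ} (hn : 0 < n) {δ₁ δ₂ ω : ℝ} (hω0 : 0 ≤ ω)
    {υ : DyadicCube n → ℝ} (hυ : IsGrowthFunction n δ₁ δ₂ ω υ) :
    ∃ D : ℝ, 0 < D ∧ ∀ (ε : Fin n → Bool) (m : ℕ), 1 ≤ m →
      υ (bigCube n ε m) ≤ D * ((2:ℝ) ^ ((n:ℝ) * δ₂)) ^ m := by
  obtain ⟨hpos, C, hC, hgrow⟩ := hυ
  set R : DyadicCube n := ⟨0, fun _ => 0⟩ with hR
  refine ⟨υ R * (C * (1 + Real.sqrt n) ^ ω), by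
    have := hpos R
    have h1 : (0:ℝ) < (1 + Real.sqrt n) ^ ω :=
      Real.rpow_pos_of_pos (by positivity) ω
    positivity, ?_⟩
  intro ε m hm
  set Q : DyadicCube n := bigCube n ε m with hQ
  have hlenQ : Q.len = 2 ^ m := bigCube_len ε m
  have hlenR : R.len = 1 := by simp [hR, DyadicCube.len]
  have hpowpos : (0:ℝ) < 2 ^ m := by positivity
  have hpow1 : (1:ℝ) < 2 ^ m := one_lt_pow₀ one_lt_two (Nat.one_le_iff_ne_zero.mp hm)
  have hnotle : ¬ Q.len ≤ R.len := by rw [hlenQ, hlenR]; linarith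
  have hvolR : R.vol = 1 := by simp [DyadicCube.vol, hlenR]
  have hvolQ : Q.vol = 2 ^ (m * n) := by rw [DyadicCube.vol, hlenQ, ← pow_mul]
  have hcornerR : ∀ i, R.corner i = 0 := by intro i; simp [hR, DyadicCube.corner]
  -- distance bound
  have hcd : Q.cdist R ≤ Real.sqrt n * 2 ^ m := by
    have hsum : ∑ i, (Q.corner i - R.corner i) ^ 2 ≤ (n : ℝ) * ((2:ℝ) ^ m) ^ 2 := by
      calc ∑ i, (Q.corner i - R.corner i) ^ 2
          ≤ ∑ _i : Fin n, ((2:ℝ) ^ m) ^ 2 := by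
            refine Finset.sum_le_sum fun i _ => ?_
            rw [hcornerR i, sub_zero, hQ, bigCube_corner]
            split
            · rw [neg_pow]; simp [pow_succ]
            · simpa using sq_nonneg ((2:ℝ)^m)
        _ = (n : ℝ) * ((2:ℝ) ^ m) ^ 2 := by simp [mul_comm]
    calc Q.cdist R ≤ Real.sqrt ((n : ℝ) * ((2:ℝ) ^ m) ^ 2) := Real.sqrt_le_sqrt hsum
      _ = Real.sqrt n * 2 ^ m := by
          rw [Real.sqrt_mul (by positivity), Real.sqrt_sq (by positivity)]
  have hmax : max Q.len R.len = 2 ^ m := by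
    rw [hlenQ, hlenR]; exact max_eq_left (by linarith)
  have hX : 1 + Q.cdist R / max Q.len R.len ≤ 1 + Real.sqrt n := by
    rw [hmax]
    have : Q.cdist R / 2 ^ m ≤ Real.sqrt n := by
      rw [div_le_iff₀ hpowpos]; exact hcd
    linarith
  have hXpos : 0 ≤ 1 + Q.cdist R / max Q.len R.len := by
    have : 0 ≤ Q.cdist R := Real.sqrt_nonneg _
    have := hmax ▸ hpowpos
    positivity
  -- volume factor
  have hV : (Q.vol / R.vol) ^ δ₂ = ((2:ℝ) ^ ((n:ℝ) * δ₂)) ^ m := by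
    rw [hvolQ, hvolR, div_one, ← Real.rpow_natCast (2:ℝ) (m * n), ← Real.rpow_mul (by norm_num),
      ← Real.rpow_natCast ((2:ℝ) ^ ((n:ℝ) * δ₂)) m, ← Real.rpow_mul (by norm_num)]
    congr 1
    push_cast
    ring
  have hgr := hgrow Q R
  rw [if_neg hnotle] at hgr
  have hchain : υ Q / υ R ≤ C * (1 + Real.sqrt n) ^ ω * ((2:ℝ) ^ ((n:ℝ) * δ₂)) ^ m := by
    calc υ Q / υ R ≤ C * (1 + Q.cdist R / max Q.len R.len) ^ ω * (Q.vol / R.vol) ^ δ₂ := hgr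
      _ ≤ C * (1 + Real.sqrt n) ^ ω * (Q.vol / R.vol) ^ δ₂ := by
          refine mul_le_mul_of_nonneg_right (mul_le_mul_of_nonneg_left ?_ hC.le) ?_
          · exact Real.rpow_le_rpow hXpos hX hω0
          · exact Real.rpow_nonneg (by rw [hvolQ, hvolR]; positivity) δ₂
      _ = C * (1 + Real.sqrt n) ^ ω * ((2:ℝ) ^ ((n:ℝ) * δ₂)) ^ m := by rw [hV]
  rw [div_le_iff₀ (hpos R)] at hchain
  calc υ Q ≤ C * (1 + Real.sqrt n) ^ ω * ((2:ℝ) ^ ((n:ℝ) * δ₂)) ^ m * υ R := hchain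
    _ = υ R * (C * (1 + Real.sqrt n) ^ ω) * ((2:ℝ) ^ ((n:ℝ) * δ₂)) ^ m := by ring

open Filter Topology in
lemma main_aux {n : ℕ} (hn : 0 < n) {δ₁ δ₂ ω : ℝ} (hδ2 : δ₂ < 0) (hω0 : 0 ≤ ω)
    {υ : DyadicCube n → ℝ} (hυ : IsGrowthFunction n δ₁ δ₂ ω υ)
    {p : ℝ} (hp : 0 < p) {f : ℤ → (Fin n → ℝ) → ℝ} (hf : ∀ j, Measurable (f j))
    (M : ℝ≥0∞) (hM : M ≠ ⊤)
    (hbound : ∀ (P : DyadicCube n) (j : ℤ), P.j ≤ j →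
      (∫⁻ x in P.toSet, ENNReal.ofReal |f j x| ^ p) ^ (1 / p) ≤ M * ENNReal.ofReal (υ P)) :
    ∀ j, f j =ᵐ[volume] 0 := by
  intro j
  set g : (Fin n → ℝ) → ℝ≥0∞ := fun x => ENNReal.ofReal |f j x| ^ p with hg
  have hgmeas : Measurable g := ((hf j).abs.ennreal_ofReal).pow_const p
  obtain ⟨D, hD, hDb⟩ := upsilon_bound hn hω0 hυ
  set r : ℝ := (2:ℝ) ^ ((n:ℝ) * δ₂) with hr
  have hr0 : 0 < r := Real.rpow_pos_of_pos two_pos _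
  have hr1 : r < 1 := Real.rpow_lt_one_of_one_lt_of_neg one_lt_two
    (mul_neg_of_pos_of_neg (by exact_mod_cast hn) hδ2)
  have hcube : ∀ (ε : Fin n → Bool) (m : ℕ), ∫⁻ x in (bigCube n ε m).toSet, g x = 0 := by
    intro ε m
    have htend : Tendsto (fun m' : ℕ => M * ENNReal.ofReal (D * r ^ m')) atTop (𝓝 0) := by
      have h1 : Tendsto (fun m' : ℕ => D * r ^ m') atTop (𝓝 0) := by
        simpa using (tendsto_pow_atTop_nhds_zero_of_lt_one hr0.le hr1).const_mul D
      have h2 := ENNReal.tendsto_ofReal h1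
      simpa using ENNReal.Tendsto.const_mul h2 (Or.inr hM)
    have hle : (∫⁻ x in (bigCube n ε m).toSet, g x) ^ (1 / p) ≤ 0 := by
      refine ge_of_tendsto htend ?_
      filter_upwards [eventually_ge_atTop (max m (max 1 (-j).toNat))] with m' hm'
      have hmm : m ≤ m' := le_trans (le_max_left _ _) hm'
      have h1m : 1 ≤ m' := le_trans (le_trans (le_max_left _ _) (le_max_right _ _)) hm'
      have hjm : (bigCube n ε m').j ≤ j := by
        have : (-j).toNat ≤ m' := le_trans (le_trans (le_max_right _ _) (le_max_right _ _)) hm'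
        have := Int.toNat_le.mp this
        simp only [bigCube]
        linarith
      calc (∫⁻ x in (bigCube n ε m).toSet, g x) ^ (1 / p)
          ≤ (∫⁻ x in (bigCube n ε m').toSet, g x) ^ (1 / p) :=
            ENNReal.rpow_le_rpow (lintegral_mono_set (bigCube_mono ε hmm)) (by positivity)
        _ ≤ M * ENNReal.ofReal (υ (bigCube n ε m')) := hbound _ j hjm
        _ ≤ M * ENNReal.ofReal (D * r ^ m') :=
            mul_le_mul_right (ENNReal.ofReal_le_ofReal (hDb ε m' h1m)) M
    have h0 : (∫⁻ x in (bigCube n ε m).toSet, g x) ^ (1 / p) = 0 := le_antisymm hle zero_le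
    rcases ENNReal.rpow_eq_zero_iff.mp h0 with ⟨h, _⟩ | ⟨_, h⟩
    · exact h
    · exact absurd h (not_lt.mpr (by positivity))
  have hzero : ∫⁻ x, g x = 0 := by
    refine le_antisymm ?_ zero_le
    calc ∫⁻ x, g x = ∫⁻ x in Set.univ, g x := (setLIntegral_univ g).symm
      _ ≤ ∫⁻ x in ⋃ (ε : Fin n → Bool), ⋃ m : ℕ, (bigCube n ε m).toSet, g x :=
          lintegral_mono_set bigCube_cover
      _ ≤ ∑' ε : Fin n → Bool, ∫⁻ x in ⋃ m : ℕ, (bigCube n ε m).toSet, g x :=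
          lintegral_iUnion_le _ _
      _ ≤ ∑' ε : Fin n → Bool, ∑' m : ℕ, ∫⁻ x in (bigCube n ε m).toSet, g x :=
          ENNReal.tsum_le_tsum fun ε => lintegral_iUnion_le _ _
      _ = 0 := by simp [hcube]
  have hae : g =ᵐ[volume] 0 := (lintegral_eq_zero_iff hgmeas).mp hzero
  filter_upwards [hae] with x hx
  simp only [hg, Pi.zero_apply] at hx ⊢
  rcases ENNReal.rpow_eq_zero_iff.mp hx with ⟨h, _⟩ | ⟨h, _⟩
  · have := ENNReal.ofReal_eq_zero.mp h
    have := abs_nonneg (f j x)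
    have : |f j x| = 0 := le_antisymm ‹|f j x| ≤ 0› this
    exact abs_eq_zero.mp this
  · exact absurd h ENNReal.ofReal_ne_top


/-- Let `δ₂ < 0`, `δ₁ ≤ δ₂`, `0 ≤ ω ≤ n(δ₂ - δ₁)` and
`υ ∈ 𝒢(δ₁, δ₂; ω)`, and let `p ∈ (0,∞)`, `q ∈ (0,∞]`. If a sequence `{f_j}` of measurable
functions has finite `LȦ^υ_{p,q}`-norm (for `A = B` or `A = F`), then every `f_j`
vanishes a.e.; i.e. the space `LȦ^υ_{p,q}` is trivial. -/
theorem LAv_space_trivial (n : ℕ) (hn : 0 < n) (δ₁ δ₂ ω : ℝ)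
    (hδ2 : δ₂ < 0) (hδ : δ₁ ≤ δ₂) (hω0 : 0 ≤ ω) (hω : ω ≤ (n : ℝ) * (δ₂ - δ₁))
    (υ : DyadicCube n → ℝ) (hυ : IsGrowthFunction n δ₁ δ₂ ω υ)
    (p : ℝ) (hp : 0 < p) (q : ℝ≥0∞) (hq : 0 < q)
    (f : ℤ → (Fin n → ℝ) → ℝ) (hf : ∀ j, Measurable (f j)) :
    (LBvNorm n p q υ f ≠ ⊤ → ∀ j, f j =ᵐ[volume] 0) ∧
    (LFvNorm n p q υ f ≠ ⊤ → ∀ j, f j =ᵐ[volume] 0) := by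
  constructor
  · intro hB
    exact main_aux hn hδ2 hω0 hυ hp hf (LBvNorm n p q υ f) hB
      (fun P j hj => setIntegral_le_of_LB hp hq hυ.1 P hj)
  · intro hF
    exact main_aux hn hδ2 hω0 hυ hp hf (LFvNorm n p q υ f) hF
      (fun P j hj => setIntegral_le_of_LF hp hq hυ.1 P hj)
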